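/- arXiv:1505.05912 — 4 statements merged into one kernel-verified Lean document; each statement's English description precedes it below -/
import Mathlib

section
/- Let p be a prime and L, N integers with 0 < L+1 < L+N < p, and let A(L,N) = {n! mod p : L+1 ≤ n ≤ L+N}. Then the cardinality of A(L,N) is at least N^{1/2}, i.e. |A(L,N)|² ≥ N. -/
/-!
The ratio set `A / A` contains `1 = n ! / n !` and `n = n ! / (n - 1)!` for `L + 2 ≤ n ≤ L + N`.
These `N` residues are pairwise distinct because `L + N < p`, so `N ≤ #(A / A) ≤ #A ^ 2`.
-/

open Finset Nat

open scoped Pointwise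

section FactorialRatios

variable {K : Type*} [DivisionRing K]

theorem natCast_factorial_succ_div_factorial {n : ℕ} (hn : (n ! : K) ≠ 0) :
    ((n + 1)! : K) / n ! = n + 1 := by
  rw [factorial_succ, cast_mul, mul_div_cancel_right₀ _ hn, cast_succ]

variable (p : ℕ) [CharP K p]

theorem CharP.natCast_factorial_ne_zero (hp : p.Prime) {n : ℕ} (hn : n < p) :
    (n ! : K) ≠ 0 := by
  rw [Ne, CharP.cast_eq_zero_iff K p, hp.dvd_factorial]
  omega

variable [DecidableEq K]

theorem image_natCast_subset_div_image_factorial (hp : p.Prime) {a b : ℕ} (hab : a ≤ b)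
    (hb : b < p) :
    (insert 1 (Icc (a + 1) b)).image (Nat.cast : ℕ → K) ⊆
      (Icc a b).image (fun m => (m ! : K)) / (Icc a b).image (fun m => (m ! : K)) := by
  have hfac : ∀ m, a ≤ m → m ≤ b → (m ! : K) ∈ (Icc a b).image (fun m => (m ! : K)) :=
    fun m ham hmb => mem_image_of_mem _ (mem_Icc.2 ⟨ham, hmb⟩)
  simp only [image_subset_iff, forall_mem_insert, mem_Icc]
  constructor
  · rw [cast_one, ← div_self (CharP.natCast_factorial_ne_zero p hp (n := a) (by omega))]
    exact div_mem_div (hfac a le_rfl hab) (hfac a le_rfl hab)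
  · rintro n ⟨han, hnb⟩
    obtain ⟨m, rfl⟩ : ∃ m, n = m + 1 := ⟨n - 1, by omega⟩
    rw [cast_succ, ← natCast_factorial_succ_div_factorial
      (CharP.natCast_factorial_ne_zero p hp (n := m) (by omega))]
    exact div_mem_div (hfac _ (by omega) hnb) (hfac _ (by omega) (by omega))

theorem card_image_natCast_insert_one_Icc {a b : ℕ} (ha : 1 ≤ a) (hab : a ≤ b) (hb : b < p) :
    #((insert 1 (Icc (a + 1) b)).image (Nat.cast : ℕ → K)) = b - a + 1 := by
  rw [Finset.card_image_of_injOn, card_insert_of_notMem, card_Icc, Nat.add_sub_add_right]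
  · simp only [mem_Icc]
    omega
  · refine (CharP.natCast_injOn_Iio K p).mono fun n hn => ?_
    simp only [coe_insert, coe_Icc, Set.mem_insert_iff, Set.mem_Icc] at hn
    simp only [Set.mem_Iio]
    omega

end FactorialRatios

theorem factorial_card_lower_bound (p : ℕ) [Fact p.Prime] (L N : ℕ)
    (h1 : L + 1 < L + N) (h2 : L + N < p) :
    N ≤ (((Finset.Icc (L + 1) (L + N)).image
      (fun n => (Nat.factorial n : ZMod p))).card) ^ 2 := by
  set A := (Icc (L + 1) (L + N)).image (fun n => (n ! : ZMod p))
  have hratios : (insert 1 (Icc (L + 2) (L + N))).image (Nat.cast : ℕ → ZMod p) ⊆ A / A :=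
    image_natCast_subset_div_image_factorial p Fact.out (by omega) h2
  calc N = #((insert 1 (Icc (L + 2) (L + N))).image (Nat.cast : ℕ → ZMod p)) := by
        rw [card_image_natCast_insert_one_Icc p (by omega) (by omega) h2]
        omega
    _ ≤ #(A / A) := card_le_card hratios
    _ ≤ #A * #A := card_div_le
    _ = #A ^ 2 := (sq _).symm
end

section
/- Let p be a prime, L an integer, and 1 ≤ k < j. The bivariate polynomial f(x,y) = ∏_{i=1}^{j}(x + L + i) − ∏_{i=1}^{k}(y + L + i) over ℤ/pℤ is not divisible by any linear polynomial b₁x + b₂y + c with (b₁, b₂) ≠ (0,0). -/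
/-! If a linear form `ℓ` divided `P(x) - Q(y)`, then `P(x) - Q(y)` would vanish on the line
`ℓ = 0`. Parametrising that line by polynomials turns this into an identity of univariate
polynomials: `P(x₀) = Q(t)` for a vertical line, `P(t) = Q(a t + d)` otherwise. Both are ruled
out by degrees as soon as `0 < deg Q < deg P`, which for the two shifted products means
`1 ≤ k < j`. -/

open MvPolynomial

section SeparatedDifference

variable {K : Type*} [Field K]

lemma aeval_aeval_X_sub_aeval_X (P Q : Polynomial K) (g : Fin 2 → Polynomial K) :
    aeval g (Polynomial.aeval (X 0) P - Polynomial.aeval (X 1) Q : MvPolynomial (Fin 2) K) =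
      P.comp (g 0) - Q.comp (g 1) := by
  simp only [map_sub, ← Polynomial.aeval_algHom_apply, aeval_X, Polynomial.comp_eq_aeval]

lemma aeval_linear_form (b₁ b₂ c : K) (g : Fin 2 → Polynomial K) :
    aeval g (C b₁ * X 0 + C b₂ * X 1 + C c : MvPolynomial (Fin 2) K) =
      Polynomial.C b₁ * g 0 + Polynomial.C b₂ * g 1 + Polynomial.C c := by
  simp

theorem linear_form_not_dvd_sub_of_natDegree_lt (P Q : Polynomial K)
    (hQ : 0 < Q.natDegree) (hQP : Q.natDegree < P.natDegree)
    (b₁ b₂ c : K) (hb : (b₁, b₂) ≠ (0, 0)) :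
    ¬ (C b₁ * X 0 + C b₂ * X 1 + C c ∣
      (Polynomial.aeval (X 0) P - Polynomial.aeval (X 1) Q : MvPolynomial (Fin 2) K)) := by
  intro hdvd
  have vanish : ∀ g : Fin 2 → Polynomial K,
      Polynomial.C b₁ * g 0 + Polynomial.C b₂ * g 1 + Polynomial.C c = 0 →
        P.comp (g 0) = Q.comp (g 1) := by
    intro g hg
    have := map_dvd (aeval g) hdvd
    rwa [aeval_linear_form, hg, zero_dvd_iff, aeval_aeval_X_sub_aeval_X, sub_eq_zero] at this
  by_cases hb₂ : b₂ = 0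
  · have hb₁ : b₁ ≠ 0 := fun h => hb (by simp [h, hb₂])
    have hPQ := vanish ![Polynomial.C (-c / b₁), Polynomial.X] (by
      simp only [Matrix.cons_val_zero, Matrix.cons_val_one, hb₂, ← Polynomial.C_mul,
        ← Polynomial.C_add, Polynomial.C_0, zero_mul, add_zero]
      rw [mul_div_cancel₀ _ hb₁, neg_add_cancel, Polynomial.C_0])
    simp only [Matrix.cons_val_zero, Matrix.cons_val_one, Polynomial.comp_X,
      Polynomial.comp_C] at hPQ
    simp [← hPQ] at hQ
  · have hPQ := vanish
      ![Polynomial.X, Polynomial.C (-b₁ / b₂) * Polynomial.X + Polynomial.C (-c / b₂)] (by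
        simp only [Matrix.cons_val_zero, Matrix.cons_val_one, mul_add, ← mul_assoc,
          ← Polynomial.C_mul, mul_div_cancel₀ _ hb₂, Polynomial.C_neg]
        ring)
    simp only [Matrix.cons_val_zero, Matrix.cons_val_one, Polynomial.comp_X] at hPQ
    have hle : P.natDegree ≤ Q.natDegree := by
      rw [hPQ]
      calc _ ≤ Q.natDegree * 1 := Polynomial.natDegree_comp_le.trans
            (Nat.mul_le_mul_left _ Polynomial.natDegree_linear_le)
        _ = Q.natDegree := mul_one _
    omega

end SeparatedDifference

lemma natDegree_prod_X_add_C {K : Type*} [Field K] {ι : Type*} (s : Finset ι) (a : ι → K) :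
    (∏ i ∈ s, (Polynomial.X + Polynomial.C (a i))).natDegree = s.card := by
  rw [Polynomial.natDegree_prod _ _ fun i _ => Polynomial.X_add_C_ne_zero (a i)]
  simp

theorem bivariate_poly_no_linear_factor_general (p : ℕ) [Fact p.Prime] (L : ℤ) (j k : ℕ)
    (hk : 1 ≤ k) (hkj : k < j)
    (f : MvPolynomial (Fin 2) (ZMod p))
    (hf : f = (∏ i ∈ Finset.Icc 1 j, (X 0 + C (L : ZMod p) + C (i : ZMod p)))
            - (∏ i ∈ Finset.Icc 1 k, (X 1 + C (L : ZMod p) + C (i : ZMod p)))) :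
    ∀ b₁ b₂ c : ZMod p, (b₁, b₂) ≠ (0, 0) →
      ¬ (C b₁ * X 0 + C b₂ * X 1 + C c ∣ f) := by
  intro b₁ b₂ c hb
  let shiftedProd (n : ℕ) : Polynomial (ZMod p) :=
    ∏ i ∈ Finset.Icc 1 n, (Polynomial.X + Polynomial.C ((L : ZMod p) + i))
  have hdeg (n : ℕ) : (shiftedProd n).natDegree = n := by
    simp only [shiftedProd, natDegree_prod_X_add_C, Nat.card_Icc, Nat.add_sub_cancel]
  have hf' :
      f = Polynomial.aeval (X 0) (shiftedProd j) - Polynomial.aeval (X 1) (shiftedProd k) := by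
    simp [hf, shiftedProd, add_assoc]
  rw [hf']
  exact linear_form_not_dvd_sub_of_natDegree_lt _ _ (by rw [hdeg]; omega)
    (by rw [hdeg, hdeg]; omega) b₁ b₂ c hb

theorem bivariate_poly_no_linear_factor (p : ℕ) [Fact p.Prime] (L : ℤ) (j k : ℕ)
    (hk : 1 ≤ k) (hkj : k < j) (hjp : j < p)
    (f : MvPolynomial (Fin 2) (ZMod p))
    (hf : f = (∏ i ∈ Finset.Icc 1 j, (X 0 + C (L : ZMod p) + C (i : ZMod p)))
            - (∏ i ∈ Finset.Icc 1 k, (X 1 + C (L : ZMod p) + C (i : ZMod p)))) :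
    ∀ b₁ b₂ c : ZMod p, (b₁, b₂) ≠ (0, 0) →
      ¬ (C b₁ * X 0 + C b₂ * X 1 + C c ∣ f) :=
  bivariate_poly_no_linear_factor_general p L j k hk hkj f hf
end

section
/- Let p be a prime and N an integer with 1 ≤ N < p^{1/2}, and let A = {n! mod p : 1 ≤ n ≤ N}. Then |A·A|⁴ ≥ #{(n,m) : 1 ≤ n,m ≤ N, gcd(n,m)=1}; consequently |A·A| ≫ N as N → ∞ (with N < √p). -/
/-!
For coprime `1 ≤ n, m ≤ N` the residue `n / m = (n! (m-1)!) / ((n-1)! m!)` lies in the ratio set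
`(A·A)/(A·A)`, which has at most `|A·A|²` elements. These residues are pairwise distinct: `N² < p`
turns `n / m = n' / m'` into the integer identity `n m' = n' m`, and coprimality gives
`(n, m) = (n', m')`. Hence `|A·A|²` is at least the number of coprime pairs, and the pairs sharing
a divisor `d ≥ 2` number at most `N² ∑_{d ≥ 2} d⁻² ≤ 11 N² / 12`, so `|A·A|² ≥ N² / 12`.
-/

open Finset Pointwise
open scoped Nat

def coprimePairs (N : ℕ) : Finset (ℕ × ℕ) :=
  (Icc 1 N ×ˢ Icc 1 N).filter (fun q => Nat.gcd q.1 q.2 = 1)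

lemma Nat.eq_and_eq_of_mul_eq_mul_of_coprime {n m n' m' : ℕ} (h : n * m' = n' * m)
    (hc : n.Coprime m) (hc' : n'.Coprime m') : n = n' ∧ m = m' := by
  have hn : n = n' := Nat.dvd_antisymm
    (hc.dvd_of_dvd_mul_right (h ▸ dvd_mul_right n m'))
    (hc'.dvd_of_dvd_mul_right (h ▸ dvd_mul_right n' m))
  subst hn
  refine ⟨rfl, ?_⟩
  rcases Nat.eq_zero_or_pos n with rfl | hpos
  · rw [Nat.coprime_zero_left] at hc hc'
    rw [hc, hc']
  · exact (Nat.eq_of_mul_eq_mul_left hpos h).symm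

lemma ZMod.natCast_ne_zero_of_pos_of_lt {p k : ℕ} (hk₀ : 0 < k) (hk : k < p) :
    (k : ZMod p) ≠ 0 := by
  rw [Ne, ZMod.natCast_eq_zero_iff]
  exact fun h => absurd (Nat.le_of_dvd hk₀ h) (by omega)

lemma ZMod.natCast_factorial_ne_zero {p k : ℕ} [Fact p.Prime] (hk : k < p) :
    (k ! : ZMod p) ≠ 0 := by
  rw [Ne, ZMod.natCast_eq_zero_iff, (Fact.out : p.Prime).dvd_factorial]
  omega

lemma natCast_succ_div_natCast_succ_eq_factorial_ratio {K : Type*} [Field K] (k l : ℕ)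
    (hk : (k ! : K) ≠ 0) (hl : (l ! : K) ≠ 0) :
    ((k + 1 : ℕ) : K) / (l + 1 : ℕ) = ((k + 1)! * l !) / (k ! * (l + 1)!) := by
  simp only [Nat.factorial_succ, Nat.cast_mul]
  field_simp

lemma natCast_div_injOn_coprimePairs {p N : ℕ} [Fact p.Prime] (hN : N ^ 2 < p) :
    Set.InjOn (fun q : ℕ × ℕ => (q.1 : ZMod p) / q.2) (coprimePairs N) := by
  rintro ⟨n, m⟩ hq ⟨n', m'⟩ hq' h
  simp only [coprimePairs, coe_filter, mem_product, mem_Icc, Set.mem_ofPred_eq] at hq hq'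
  have hlt : ∀ a b, a ≤ N → b ≤ N → a * b < p := fun a b ha hb =>
    lt_of_le_of_lt (by rw [sq]; exact Nat.mul_le_mul ha hb) hN
  have hNp : N < p := lt_of_le_of_lt (Nat.le_self_pow two_ne_zero N) hN
  have hcast : ((n * m' : ℕ) : ZMod p) = (n' * m : ℕ) := by
    push_cast
    exact (div_eq_div_iff (ZMod.natCast_ne_zero_of_pos_of_lt hq.1.2.1 (by omega))
      (ZMod.natCast_ne_zero_of_pos_of_lt hq'.1.2.1 (by omega))).1 h
  have := Nat.eq_and_eq_of_mul_eq_mul_of_coprime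
    (((ZMod.natCast_eq_natCast_iff _ _ _).1 hcast).eq_of_lt_of_lt
      (hlt _ _ hq.1.1.2 hq'.1.2.2) (hlt _ _ hq'.1.1.2 hq.1.2.2)) hq.2 hq'.2
  simp [this]

lemma factorial_mem_image_factorial {R : Type*} [Semiring R] [DecidableEq R] {N k : ℕ}
    (hN : 0 < N) (hk : k ≤ N) : (k ! : R) ∈ (Icc 1 N).image (fun n => (n ! : R)) := by
  rw [mem_image]
  rcases Nat.eq_zero_or_pos k with rfl | hk₀
  · exact ⟨1, mem_Icc.2 ⟨le_rfl, hN⟩, rfl⟩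
  · exact ⟨k, mem_Icc.2 ⟨hk₀, hk⟩, rfl⟩

lemma card_coprimePairs_le_sq_card_mul_factorials {p N : ℕ} [Fact p.Prime] (hN : N ^ 2 < p) :
    #(coprimePairs N) ≤ #((Icc 1 N).image (fun n => (n ! : ZMod p)) *
      (Icc 1 N).image (fun n => (n ! : ZMod p))) ^ 2 := by
  set A := (Icc 1 N).image (fun n => (n ! : ZMod p))
  have hNp : N < p := lt_of_le_of_lt (Nat.le_self_pow two_ne_zero N) hN
  have hratio : ∀ q ∈ coprimePairs N, (q.1 : ZMod p) / q.2 ∈ (A * A) / (A * A) := by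
    rintro ⟨n, m⟩ hq
    simp only [coprimePairs, mem_filter, mem_product, mem_Icc] at hq
    obtain ⟨k, rfl⟩ := Nat.exists_eq_add_of_le' hq.1.1.1
    obtain ⟨l, rfl⟩ := Nat.exists_eq_add_of_le' hq.1.2.1
    rw [natCast_succ_div_natCast_succ_eq_factorial_ratio (K := ZMod p) k l
      (ZMod.natCast_factorial_ne_zero (by omega)) (ZMod.natCast_factorial_ne_zero (by omega))]
    have hmem : ∀ j ≤ N, (j ! : ZMod p) ∈ A := fun j => factorial_mem_image_factorial (by omega)
    exact div_mem_div (mul_mem_mul (hmem _ (by omega)) (hmem _ (by omega)))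
      (mul_mem_mul (hmem _ (by omega)) (hmem _ (by omega)))
  calc #(coprimePairs N) = #((coprimePairs N).image fun q => (q.1 : ZMod p) / q.2) :=
        (card_image_of_injOn (natCast_div_injOn_coprimePairs hN)).symm
    _ ≤ #((A * A) / (A * A)) := card_le_card (image_subset_iff.2 hratio)
    _ ≤ #(A * A) ^ 2 := (card_div_le).trans_eq (sq _).symm

lemma card_filter_dvd_Icc_one (N d : ℕ) : #{x ∈ Icc 1 N | d ∣ x} = N / d := by
  rw [← Nat.Ioc_filter_dvd_card_eq_div, ← Icc_add_one_left_eq_Ioc, zero_add]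

lemma card_filter_not_coprime_le_sum (N : ℕ) :
    #{q ∈ Icc 1 N ×ˢ Icc 1 N | Nat.gcd q.1 q.2 ≠ 1} ≤ ∑ d ∈ Icc 2 N, (N / d) ^ 2 := by
  have hcover : {q ∈ Icc 1 N ×ˢ Icc 1 N | Nat.gcd q.1 q.2 ≠ 1} ⊆
      (Icc 2 N).biUnion fun d => {x ∈ Icc 1 N | d ∣ x} ×ˢ {x ∈ Icc 1 N | d ∣ x} := by
    rintro ⟨n, m⟩ hq
    simp only [mem_filter, mem_product, mem_Icc] at hq
    have hpos : 0 < n.gcd m := Nat.gcd_pos_of_pos_left m (by omega)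
    have hle : n.gcd m ≤ N := (Nat.gcd_le_left m (by omega)).trans hq.1.1.2
    simp only [mem_biUnion, mem_product, mem_filter, mem_Icc]
    exact ⟨n.gcd m, ⟨by omega, hle⟩, ⟨hq.1.1, Nat.gcd_dvd_left n m⟩,
      ⟨hq.1.2, Nat.gcd_dvd_right n m⟩⟩
  calc _ ≤ _ := card_le_card hcover
    _ ≤ _ := card_biUnion_le
    _ = _ := by simp only [card_product, card_filter_dvd_Icc_one, sq]

lemma sum_Icc_two_inv_sq_le (n : ℕ) : ∑ d ∈ Icc 2 n, ((d : ℝ) ^ 2)⁻¹ ≤ 11 / 12 := by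
  have hsub : Icc 2 n ⊆ insert 2 (Ioo 2 (n + 1)) := by
    intro d hd
    simp only [mem_Icc, mem_insert, mem_Ioo] at hd ⊢
    omega
  calc ∑ d ∈ Icc 2 n, ((d : ℝ) ^ 2)⁻¹
      ≤ ∑ d ∈ insert 2 (Ioo 2 (n + 1)), ((d : ℝ) ^ 2)⁻¹ :=
        sum_le_sum_of_subset_of_nonneg hsub fun _ _ _ => by positivity
    _ = 1 / 4 + ∑ d ∈ Ioo 2 (n + 1), ((d : ℝ) ^ 2)⁻¹ := by
        rw [sum_insert (by simp)]
        norm_num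
    _ ≤ 1 / 4 + 2 / (2 + 1) := by gcongr; exact sum_Ioo_inv_sq_le 2 (n + 1)
    _ = 11 / 12 := by norm_num

lemma sq_le_twelve_mul_card_coprimePairs (N : ℕ) :
    (N : ℝ) ^ 2 ≤ 12 * #(coprimePairs N) := by
  have hsplit : #(coprimePairs N) + #{q ∈ Icc 1 N ×ˢ Icc 1 N | Nat.gcd q.1 q.2 ≠ 1} = N ^ 2 := by
    rw [coprimePairs, card_filter_add_card_filter_not, card_product, Nat.card_Icc, sq,
      Nat.add_sub_cancel]
  have hterm : ∀ d ∈ Icc 2 N, (((N / d) ^ 2 : ℕ) : ℝ) ≤ (N : ℝ) ^ 2 * ((d : ℝ) ^ 2)⁻¹ := by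
    intro d _
    rw [← div_eq_mul_inv, ← div_pow, Nat.cast_pow]
    gcongr
    exact Nat.cast_div_le
  have hnot : (#{q ∈ Icc 1 N ×ˢ Icc 1 N | Nat.gcd q.1 q.2 ≠ 1} : ℝ) ≤ 11 / 12 * (N : ℝ) ^ 2 :=
    calc (#{q ∈ Icc 1 N ×ˢ Icc 1 N | Nat.gcd q.1 q.2 ≠ 1} : ℝ)
        ≤ ∑ d ∈ Icc 2 N, (((N / d) ^ 2 : ℕ) : ℝ) := by
          exact_mod_cast card_filter_not_coprime_le_sum N
      _ ≤ (N : ℝ) ^ 2 * ∑ d ∈ Icc 2 N, ((d : ℝ) ^ 2)⁻¹ := by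
          rw [mul_sum]; exact sum_le_sum hterm
      _ ≤ (N : ℝ) ^ 2 * (11 / 12) := by gcongr; exact sum_Icc_two_inv_sq_le N
      _ = 11 / 12 * (N : ℝ) ^ 2 := mul_comm _ _
  have hsplit' := congrArg (Nat.cast : ℕ → ℝ) hsplit
  push_cast at hsplit'
  linarith

theorem product_set_card_lower_bound :
    (∀ (p N : ℕ), p.Prime → 1 ≤ N → N ^ 2 < p →
      ∀ A : Finset (ZMod p),
        A = (Finset.Icc 1 N).image (fun n => (Nat.factorial n : ZMod p)) →
        ((Finset.Icc 1 N ×ˢ Finset.Icc 1 N).filter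
            (fun q => Nat.gcd q.1 q.2 = 1)).card ≤ ((A * A).card) ^ 4) ∧
    ∃ c : ℝ, 0 < c ∧ ∃ N₀ : ℕ, ∀ (p N : ℕ), p.Prime → N₀ ≤ N → N ^ 2 < p →
      ∀ A : Finset (ZMod p),
        A = (Finset.Icc 1 N).image (fun n => (Nat.factorial n : ZMod p)) →
        c * (N : ℝ) ≤ ((A * A).card : ℝ) := by
  refine ⟨fun p N hp _ hN A hA => ?_, 1 / 4, by norm_num, 0, fun p N hp _ hN A hA => ?_⟩
  all_goals
    have : Fact p.Prime := ⟨hp⟩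
    have hsq : #(coprimePairs N) ≤ #(A * A) ^ 2 :=
      hA ▸ card_coprimePairs_le_sq_card_mul_factorials hN
  · calc #(coprimePairs N) ≤ #(A * A) ^ 2 := hsq
      _ ≤ #(A * A) ^ 4 := by
        rcases Nat.eq_zero_or_pos #(A * A) with h | h
        · simp [h]
        · exact Nat.pow_le_pow_right h (by norm_num)
  · have hsq' : (#(coprimePairs N) : ℝ) ≤ (#(A * A) : ℝ) ^ 2 := by exact_mod_cast hsq
    nlinarith [sq_le_twelve_mul_card_coprimePairs N, (#(A * A)).cast_nonneg (α := ℝ)]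
end

section
/- Let p be a prime, L, N integers with 0 < L+1 < L+N < p, and A = A(L,N) = {n! mod p : L+1 ≤ n ≤ L+N}. For every integer j with 1 ≤ j ≤ N−1, the set X_j = {∏_{i=1}^{j}(x + L + i) mod p : 1 ≤ x ≤ N − j} is contained in the ratio set A/A. -/
open Finset Pointwise
open scoped Nat

theorem Nat.factorial_mul_prod_Icc_add (n j : ℕ) :
    n ! * ∏ i ∈ Icc 1 j, (n + i) = (n + j)! := by
  induction j with
  | zero => simp
  | succ j ih =>
    rw [prod_Icc_succ_top (by omega), ← mul_assoc, ih, ← add_assoc, Nat.factorial_succ, mul_comm]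

theorem natCast_factorial_add_div_factorial {K : Type*} [Field K] {n : ℕ} (hn : (n ! : K) ≠ 0)
    (j : ℕ) : ((n + j)! : K) / n ! = ∏ i ∈ Icc 1 j, ((n + i : ℕ) : K) := by
  rw [div_eq_iff hn, ← Nat.factorial_mul_prod_Icc_add n j]
  push_cast
  ring

theorem Xj_subset_ratio_set_general (p : ℕ) [Fact p.Prime] (L N : ℕ)
    (h2 : L + N < p)
    (A : Finset (ZMod p))
    (hA : A = (Finset.Icc (L + 1) (L + N)).image (fun n => (Nat.factorial n : ZMod p)))
    (j : ℕ) :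
    (Finset.Icc 1 (N - j)).image
        (fun x : ℕ => ∏ i ∈ Finset.Icc 1 j, ((x + L + i : ℕ) : ZMod p))
      ⊆ A / A := by
  intro a ha
  obtain ⟨x, hx, rfl⟩ := mem_image.1 ha
  rw [mem_Icc] at hx
  have hx_fact : ((x + L)! : ZMod p) ≠ 0 :=
    ((IsUnit.natCast_factorial_iff_of_charP p).2 (by omega)).ne_zero
  subst hA
  exact mem_div.2 ⟨_, mem_image_of_mem _ (mem_Icc.2 (by omega) : x + L + j ∈ _), _,
    mem_image_of_mem _ (mem_Icc.2 (by omega) : x + L ∈ _),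
    natCast_factorial_add_div_factorial hx_fact j⟩

theorem Xj_subset_ratio_set (p : ℕ) [Fact p.Prime] (L N : ℕ)
    (h1 : L + 1 < L + N) (h2 : L + N < p)
    (A : Finset (ZMod p))
    (hA : A = (Finset.Icc (L + 1) (L + N)).image (fun n => (Nat.factorial n : ZMod p)))
    (j : ℕ) (hj1 : 1 ≤ j) (hj2 : j ≤ N - 1) :
    (Finset.Icc 1 (N - j)).image
        (fun x : ℕ => ∏ i ∈ Finset.Icc 1 j, ((x + L + i : ℕ) : ZMod p))
      ⊆ A / A :=
  Xj_subset_ratio_set_general p L N h2 A hA j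
end
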